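/- Let q be a power of a prime and let r ≥ 2 be an integer. There exists a constant c_2 depending only on D, q, and r such that the following holds: for every a = a_1/a_2 ∈ K = F_q(t) with a_1, a_2 ∈ F_q[t] nonzero coprime polynomials and max{deg_t(a_1), deg_t(a_2)} ≤ D, and for every integer M ≥ 1, the polynomial g̃_{a,M}(z), defined as the product of g_{a,R}(z) := a_2^{q^{r·deg_T(R)}}·Φ^{(z)}_{R(T)}(a) over all monic polynomials R(T) ∈ F_q[T] with 1 ≤ deg_T(R) ≤ M, satisfies h(g̃_{a,M}) ≤ c_2·(2+D)^{q^{(r+1)(M+1)}}. -/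
import Mathlib


open Polynomial

/-- The map `x ↦ t·x + z·x^q + x^{q^r}` on `K[z]`, where `K = F_q(t)` and the parameter
`z` is the polynomial variable. -/
noncomputable def drinfeldPolyPhi (q r : ℕ) {Fq : Type*} [Field Fq]
    (x : Polynomial (RatFunc Fq)) : Polynomial (RatFunc Fq) :=
  C RatFunc.X * x + X * x ^ q + x ^ q ^ r

/-- `Φ^{(z)}_{P(T)}(a)` viewed as a polynomial in the parameter `z`, with coefficients
in `K = F_q(t)`. -/
noncomputable def drinfeldPolyAct (q r : ℕ) {Fq : Type*} [Field Fq]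
    (P : Polynomial Fq) (a : RatFunc Fq) : Polynomial (RatFunc Fq) :=
  ∑ i ∈ Finset.range (P.natDegree + 1),
    C (algebraMap Fq (RatFunc Fq) (P.coeff i)) * (drinfeldPolyPhi q r)^[i] (C a)

/-- `g_{a,R}(z) = a₂^{q^{r·deg R}}·Φ^{(z)}_{R(T)}(a)` as an element of `K[z]`. -/
noncomputable def gPoly (q r : ℕ) {Fq : Type*} [Field Fq]
    (a₂ : Polynomial Fq) (R : Polynomial Fq) (a : RatFunc Fq) : Polynomial (RatFunc Fq) :=
  C ((algebraMap (Polynomial Fq) (RatFunc Fq) a₂) ^ q ^ (r * R.natDegree)) *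
    drinfeldPolyAct q r R a

/-- The height of a polynomial `g ∈ F_q[t][z]`: the maximum of the `t`-degrees of its
coefficients. -/
noncomputable def polyHeight {Fq : Type*} [Field Fq] (g : Polynomial (Polynomial Fq)) : ℕ :=
  g.support.sup fun i => (g.coeff i).natDegree

section Aux

variable {Fq : Type*} [Field Fq]

lemma coeff_height_le (g : Polynomial (Polynomial Fq)) (i : ℕ) :
    (g.coeff i).natDegree ≤ polyHeight g := by
  by_cases h : i ∈ g.support
  · exact Finset.le_sup (f := fun i => (g.coeff i).natDegree) h
  · rw [Polynomial.notMem_support_iff.mp h]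
    simp

lemma polyHeight_le {g : Polynomial (Polynomial Fq)} {n : ℕ}
    (h : ∀ i, (g.coeff i).natDegree ≤ n) : polyHeight g ≤ n :=
  Finset.sup_le fun i _ => h i

lemma polyHeight_mul_le (g h : Polynomial (Polynomial Fq)) :
    polyHeight (g * h) ≤ polyHeight g + polyHeight h := by
  refine polyHeight_le fun k => ?_
  rw [Polynomial.coeff_mul]
  refine Polynomial.natDegree_sum_le_of_forall_le _ _ fun p hp => ?_
  exact (Polynomial.natDegree_mul_le).trans
    (add_le_add (coeff_height_le g _) (coeff_height_le h _))

lemma polyHeight_pow_le (g : Polynomial (Polynomial Fq)) (n : ℕ) :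
    polyHeight (g ^ n) ≤ n * polyHeight g := by
  induction n with
  | zero =>
      refine le_trans (polyHeight_le fun i => ?_) (Nat.zero_le _)
      rcases eq_or_ne i 0 with rfl | hne
      · simp
      · simp [Polynomial.coeff_one, hne]
  | succ n ih =>
      rw [pow_succ]
      calc polyHeight (g ^ n * g) ≤ polyHeight (g ^ n) + polyHeight g := polyHeight_mul_le _ _
      _ ≤ n * polyHeight g + polyHeight g := by omega
      _ = (n+1) * polyHeight g := by ring

lemma polyHeight_add_le (g h : Polynomial (Polynomial Fq)) :
    polyHeight (g + h) ≤ max (polyHeight g) (polyHeight h) := by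
  refine polyHeight_le fun k => ?_
  rw [Polynomial.coeff_add]
  exact (Polynomial.natDegree_add_le _ _).trans
    (max_le_max (coeff_height_le g _) (coeff_height_le h _))

lemma polyHeight_C_le (p : Polynomial Fq) : polyHeight (C p) ≤ p.natDegree :=
  polyHeight_le fun i => by
    rcases eq_or_ne i 0 with rfl | h
    · simp
    · simp [Polynomial.coeff_C, h]

lemma polyHeight_sum_le {α : Type*} (s : Finset α) (f : α → Polynomial (Polynomial Fq)) (n : ℕ)
    (h : ∀ i ∈ s, polyHeight (f i) ≤ n) : polyHeight (∑ i ∈ s, f i) ≤ n := by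
  refine polyHeight_le fun k => ?_
  rw [Polynomial.finset_sum_coeff]
  exact Polynomial.natDegree_sum_le_of_forall_le _ _ fun p hp => (coeff_height_le _ _).trans (h p hp)

lemma polyHeight_prod_le {α : Type*} (s : Finset α) (f : α → Polynomial (Polynomial Fq)) (n : ℕ)
    (h : ∀ i ∈ s, polyHeight (f i) ≤ n) : polyHeight (∏ i ∈ s, f i) ≤ s.card * n := by
  induction s using Finset.cons_induction with
  | empty =>
      refine le_trans (polyHeight_le fun i => ?_) (Nat.zero_le _)
      rcases eq_or_ne i 0 with rfl | hne
      · simp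
      · simp [Polynomial.coeff_one, hne]
  | cons a s ha ih =>
      rw [Finset.prod_cons, Finset.card_cons]
      calc polyHeight (f a * ∏ i ∈ s, f i) ≤ polyHeight (f a) + polyHeight (∏ i ∈ s, f i) :=
            polyHeight_mul_le _ _
      _ ≤ n + s.card * n := add_le_add (h a (Finset.mem_cons_self _ _))
            (ih fun i hi => h i (Finset.mem_cons_of_mem hi))
      _ = (s.card + 1) * n := by ring

/-- The integral model of `a₂^{q^{ri}}·φ^{∘i}(a)`, an element of `F_q[t][z]`. -/
noncomputable def GInt (q r : ℕ) (a₁ a₂ : Polynomial Fq) : ℕ → Polynomial (Polynomial Fq)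
  | 0 => C a₁
  | (i+1) => C (Polynomial.X * a₂ ^ (q ^ (r*i) * (q^r - 1))) * GInt q r a₁ a₂ i
      + X * C (a₂ ^ (q ^ (r*i) * (q^r - q))) * (GInt q r a₁ a₂ i) ^ q
      + (GInt q r a₁ a₂ i) ^ q ^ r

lemma map_GInt (q r : ℕ) (hq : 2 ≤ q) (hr : 1 ≤ r) (a₁ a₂ : Polynomial Fq)
    (a : RatFunc Fq)
    (ha : algebraMap (Polynomial Fq) (RatFunc Fq) a₂ * a
        = algebraMap (Polynomial Fq) (RatFunc Fq) a₁) (i : ℕ) :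
    (GInt q r a₁ a₂ i).map (algebraMap (Polynomial Fq) (RatFunc Fq)) =
      C ((algebraMap (Polynomial Fq) (RatFunc Fq) a₂) ^ q ^ (r*i)) *
        (drinfeldPolyPhi q r)^[i] (C a) := by
  set A := algebraMap (Polynomial Fq) (RatFunc Fq) a₂ with hA
  induction i with
  | zero =>
      simp only [GInt, Polynomial.map_C, Function.iterate_zero, id_eq, Nat.mul_zero, pow_zero,
        pow_one]
      rw [← ha, map_mul]
  | succ i ih =>
      have hq1 : 1 ≤ q ^ r := Nat.one_le_pow _ _ (by omega)
      have hqq : q ≤ q ^ r := Nat.le_self_pow (by omega) q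
      set B := q ^ (r*i) with hB
      have hrw : q ^ (r*(i+1)) = B * q ^ r := by rw [hB, ← pow_add]; ring_nf
      have pow_split : ∀ (x : Polynomial (RatFunc Fq)) (m n : ℕ), n ≤ m →
          x ^ (B * m) = x ^ (B * (m - n)) * (x ^ B) ^ n := by
        intro x m n h
        rw [← pow_mul, ← pow_add, ← Nat.mul_add, Nat.sub_add_cancel h]
      have e3 : (C A : Polynomial (RatFunc Fq)) ^ (B * q ^ r) = ((C A) ^ B) ^ (q ^ r) := by
        rw [← pow_mul]
      rw [Function.iterate_succ_apply', hrw]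
      show _ = C (A ^ (B * q ^ r)) * drinfeldPolyPhi q r ((drinfeldPolyPhi q r)^[i] (C a))
      simp only [GInt, Polynomial.map_add, Polynomial.map_mul, Polynomial.map_pow,
        Polynomial.map_C, Polynomial.map_X, map_mul, map_pow, RatFunc.algebraMap_X, ih]
      unfold drinfeldPolyPhi
      rw [mul_add, mul_add]
      nth_rewrite 1 [pow_split (C A) (q ^ r) 1 hq1]
      nth_rewrite 1 [pow_split (C A) (q ^ r) q hqq]
      nth_rewrite 1 [e3]
      simp only [pow_one]
      ring

/-- The integral model of `g_{a,R}`. -/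
noncomputable def GIntR (q r : ℕ) (a₁ a₂ R : Polynomial Fq) : Polynomial (Polynomial Fq) :=
  ∑ i ∈ Finset.range (R.natDegree + 1),
    C (Polynomial.C (R.coeff i) * a₂ ^ (q ^ (r * R.natDegree) - q ^ (r * i))) * GInt q r a₁ a₂ i

lemma map_GIntR (q r : ℕ) (hq : 2 ≤ q) (hr : 1 ≤ r) (a₁ a₂ R : Polynomial Fq)
    (a : RatFunc Fq)
    (ha : algebraMap (Polynomial Fq) (RatFunc Fq) a₂ * a
        = algebraMap (Polynomial Fq) (RatFunc Fq) a₁) :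
    (GIntR q r a₁ a₂ R).map (algebraMap (Polynomial Fq) (RatFunc Fq)) = gPoly q r a₂ R a := by
  set A := algebraMap (Polynomial Fq) (RatFunc Fq) a₂ with hA
  rw [GIntR, Polynomial.map_sum, gPoly, drinfeldPolyAct, Finset.mul_sum]
  refine Finset.sum_congr rfl fun i hi => ?_
  rw [Finset.mem_range] at hi
  have hle : q ^ (r * i) ≤ q ^ (r * R.natDegree) :=
    Nat.pow_le_pow_right (by omega) (Nat.mul_le_mul_left r (by omega))
  have epow : A ^ q ^ (r * R.natDegree)
      = A ^ (q ^ (r * R.natDegree) - q ^ (r * i)) * A ^ q ^ (r * i) := by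
    rw [← pow_add, Nat.sub_add_cancel hle]
  rw [Polynomial.map_mul, Polynomial.map_C, map_mul, map_pow, map_GInt q r hq hr a₁ a₂ a ha i,
    IsScalarTower.algebraMap_apply Fq (Polynomial Fq) (RatFunc Fq), epow]
  simp only [Polynomial.C_mul, Polynomial.C_pow, Polynomial.algebraMap_eq]
  ring

lemma polyHeight_X_le : polyHeight (X : Polynomial (Polynomial Fq)) ≤ 0 :=
  polyHeight_le fun i => by
    rcases eq_or_ne i 1 with rfl | h
    · simp
    · simp [Polynomial.coeff_X, (Ne.symm h)]

lemma arith_step (q Qr S D H : ℕ) (hq : 2 ≤ q) (h4 : 4 ≤ Qr) (hq2 : q^2 ≤ Qr) (hS4 : 4 ≤ S)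
    (ih : H ≤ (2+D)*S) :
    max (max (1 + S*D + H) (S*D + q*H)) (Qr*H) ≤ (2+D) * (S * Qr) := by
  have hq21 : q + 1 ≤ q^2 := by nlinarith
  refine max_le (max_le ?_ ?_) ?_
  · nlinarith [ih, hS4, h4]
  · calc S*D + q*H ≤ S*D + q*((2+D)*S) :=
          Nat.add_le_add_left (Nat.mul_le_mul_left q ih) _
    _ = S*(D + q*(2+D)) := by ring
    _ ≤ S*((2+D)*Qr) := Nat.mul_le_mul_left S (by nlinarith [hq2, hq21])
    _ = (2+D)*(S*Qr) := by ring
  · calc Qr*H ≤ Qr*((2+D)*S) := Nat.mul_le_mul_left Qr ih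
    _ = (2+D)*(S*Qr) := by ring

lemma polyHeight_GInt_le (q r D : ℕ) (hq : 2 ≤ q) (hr : 2 ≤ r) (a₁ a₂ : Polynomial Fq)
    (h₁ : a₁.natDegree ≤ D) (h₂ : a₂.natDegree ≤ D) :
    ∀ i, polyHeight (GInt q r a₁ a₂ i) ≤ (2 + D) * q ^ (r * (i + 1)) := by
  have hq2r : q ^ 2 ≤ q ^ r := Nat.pow_le_pow_right (by omega) hr
  have hq4 : 4 ≤ q ^ r := le_trans (by nlinarith) hq2r
  intro i
  induction i with
  | zero =>
      refine le_trans (polyHeight_C_le a₁) ?_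
      have h1 : 1 ≤ q ^ (r*(0+1)) := Nat.one_le_pow _ _ (by omega)
      nlinarith
  | succ i ih =>
      have hB1 : 1 ≤ q ^ (r*i) := Nat.one_le_pow _ _ (by omega)
      have hqqr : q ≤ q ^ r := Nat.le_self_pow (by omega) q
      have hstep : q ^ (r*(i+1)) = q ^ (r*i) * q^r := by rw [← pow_add]; ring_nf
      have hstep2 : q ^ (r*(i+1+1)) = q ^ (r*i) * q^r * q^r := by
        rw [← pow_add, ← pow_add]; ring_nf
      rw [hstep] at ih
      rw [hstep2]
      have hS4 : 4 ≤ q ^ (r*i) * q^r := le_trans hq4 (Nat.le_mul_of_pos_left _ hB1)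
      have hd2 : ∀ m ≤ q ^ r, (a₂ ^ (q ^ (r*i) * (q^r - m))).natDegree
          ≤ q ^ (r*i) * q^r * D := by
        intro m hm
        rw [Polynomial.natDegree_pow]
        calc q ^ (r*i) * (q^r - m) * a₂.natDegree ≤ q ^ (r*i) * q^r * a₂.natDegree :=
              Nat.mul_le_mul_right _ (Nat.mul_le_mul_left _ (Nat.sub_le _ _))
        _ ≤ q ^ (r*i) * q^r * D := Nat.mul_le_mul_left _ h₂
      have b1 : polyHeight (C (Polynomial.X * a₂ ^ (q ^ (r*i) * (q^r - 1))) * GInt q r a₁ a₂ i)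
          ≤ 1 + q ^ (r*i) * q^r * D + polyHeight (GInt q r a₁ a₂ i) := by
        refine le_trans (polyHeight_mul_le _ _) (add_le_add ?_ le_rfl)
        refine le_trans (polyHeight_C_le _) ?_
        refine le_trans (Polynomial.natDegree_mul_le) ?_
        exact add_le_add Polynomial.natDegree_X_le (hd2 1 (by omega))
      have b2 : polyHeight (X * C (a₂ ^ (q ^ (r*i) * (q^r - q))) * (GInt q r a₁ a₂ i) ^ q)
          ≤ q ^ (r*i) * q^r * D + q * polyHeight (GInt q r a₁ a₂ i) := by
        refine le_trans (polyHeight_mul_le _ _) (add_le_add ?_ (polyHeight_pow_le _ _))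
        refine le_trans (polyHeight_mul_le _ _) ?_
        have h0 := add_le_add (polyHeight_X_le (Fq := Fq))
          (le_trans (polyHeight_C_le (a₂ ^ (q ^ (r*i) * (q^r - q)))) (hd2 q hqqr))
        simpa using h0
      have b3 : polyHeight ((GInt q r a₁ a₂ i) ^ (q^r))
          ≤ q^r * polyHeight (GInt q r a₁ a₂ i) := polyHeight_pow_le _ _
      have hmax : polyHeight (GInt q r a₁ a₂ (i+1))
          ≤ max (max (1 + q ^ (r*i) * q^r * D + polyHeight (GInt q r a₁ a₂ i))
              (q ^ (r*i) * q^r * D + q * polyHeight (GInt q r a₁ a₂ i)))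
            (q^r * polyHeight (GInt q r a₁ a₂ i)) := by
        show polyHeight (_ + _ + _) ≤ _
        exact le_trans (polyHeight_add_le _ _)
          (max_le_max (le_trans (polyHeight_add_le _ _) (max_le_max b1 b2)) b3)
      exact le_trans hmax (arith_step q (q^r) (q ^ (r*i) * q^r) D _ hq hq4 hq2r hS4 ih)

lemma polyHeight_GIntR_le (q r D : ℕ) (hq : 2 ≤ q) (hr : 2 ≤ r) (a₁ a₂ R : Polynomial Fq)
    (h₁ : a₁.natDegree ≤ D) (h₂ : a₂.natDegree ≤ D) :
    polyHeight (GIntR q r a₁ a₂ R) ≤ 2 * (2 + D) * q ^ (r * (R.natDegree + 1)) := by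
  refine polyHeight_sum_le _ _ _ fun i hi => ?_
  rw [Finset.mem_range] at hi
  set d := R.natDegree with hd
  have hpow : q ^ (r * (i+1)) ≤ q ^ (r * (d+1)) :=
    Nat.pow_le_pow_right (by omega) (Nat.mul_le_mul_left r (by omega))
  have hpow2 : q ^ (r * d) ≤ q ^ (r * (d+1)) :=
    Nat.pow_le_pow_right (by omega) (Nat.mul_le_mul_left r (by omega))
  have hc : (Polynomial.C (R.coeff i) * a₂ ^ (q ^ (r * d) - q ^ (r * i))).natDegree
      ≤ q ^ (r * d) * D := by
    refine le_trans Polynomial.natDegree_mul_le ?_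
    rw [Polynomial.natDegree_C, Polynomial.natDegree_pow, zero_add]
    calc (q ^ (r*d) - q ^ (r*i)) * a₂.natDegree ≤ q ^ (r*d) * a₂.natDegree :=
          Nat.mul_le_mul_right _ (Nat.sub_le _ _)
    _ ≤ q ^ (r*d) * D := Nat.mul_le_mul_left _ h₂
  calc polyHeight (C (Polynomial.C (R.coeff i) * a₂ ^ (q ^ (r * d) - q ^ (r * i)))
        * GInt q r a₁ a₂ i)
      ≤ q ^ (r * d) * D + (2 + D) * q ^ (r * (i+1)) := by
        refine le_trans (polyHeight_mul_le _ _)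
          (add_le_add (le_trans (polyHeight_C_le _) hc)
            (polyHeight_GInt_le q r D hq hr a₁ a₂ h₁ h₂ i))
  _ ≤ q ^ (r * (d+1)) * (2 + D) + (2 + D) * q ^ (r * (d+1)) := by
        exact add_le_add (Nat.mul_le_mul hpow2 (by omega)) (Nat.mul_le_mul_left _ hpow)
  _ = 2 * (2 + D) * q ^ (r * (d + 1)) := by ring

lemma aux_le_two_pow : ∀ n : ℕ, n + 1 ≤ 2 ^ n := by
  intro n
  induction n with
  | zero => simp
  | succ n ih => rw [pow_succ]; omega

lemma arith_final (x n D : ℕ) (hn : 1 ≤ n) (hx : x ≤ 2*((2+D)*n)) : x ≤ 2*(2+D)^n := by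
  refine hx.trans (Nat.mul_le_mul_left 2 ?_)
  have h1 : n ≤ 2^(n-1) := by have := aux_le_two_pow (n-1); omega
  have h2 : (2:ℕ)^(n-1) ≤ (2+D)^(n-1) := Nat.pow_le_pow_left (by omega) _
  calc (2+D)*n ≤ (2+D)*(2+D)^(n-1) := Nat.mul_le_mul_left _ (h1.trans h2)
  _ = (2+D)^(n-1+1) := (pow_succ' _ _).symm
  _ = (2+D)^n := by congr 1; omega

end Aux

/-- There is a constant `c₂` depending only on `D`, `q`, `r` such that for every
`a = a₁/a₂` of degree at most `D` and `M ≥ 1`, the product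
`g̃_{a,M}(z) = ∏ g_{a,R}(z)` over monic `R` with `1 ≤ deg R ≤ M` lies in `F_q[t][z]`
and has height at most `c₂·(2+D)^{q^{(r+1)(M+1)}}`. -/
theorem drinfeld_product_height_bound
    {Fq : Type*} [Field Fq] [Fintype Fq] (q r D : ℕ)
    (hq : Fintype.card Fq = q) (hr : 2 ≤ r) :
    ∃ c₂ : ℝ, 0 < c₂ ∧
      ∀ (a₁ a₂ : Polynomial Fq), a₁ ≠ 0 → a₂ ≠ 0 → IsCoprime a₁ a₂ →
        max a₁.natDegree a₂.natDegree ≤ D →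
        ∀ a : RatFunc Fq,
          a = algebraMap (Polynomial Fq) (RatFunc Fq) a₁ /
              algebraMap (Polynomial Fq) (RatFunc Fq) a₂ →
          ∀ M : ℕ, 1 ≤ M →
            ∀ hfin : {R : Polynomial Fq |
                R.Monic ∧ 1 ≤ R.natDegree ∧ R.natDegree ≤ M}.Finite,
              ∃ G : Polynomial (Polynomial Fq),
                G.map (algebraMap (Polynomial Fq) (RatFunc Fq)) =
                  ∏ R ∈ hfin.toFinset, gPoly q r a₂ R a ∧
                (polyHeight G : ℝ) ≤
                  c₂ * ((2 : ℝ) + D) ^ q ^ ((r + 1) * (M + 1)) := by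
  classical
  refine ⟨2, by norm_num, ?_⟩
  intro a₁ a₂ h₁ h₂ hcop hdeg a haeq M hM hfin
  have hq2 : 2 ≤ q := by
    have := Fintype.one_lt_card (α := Fq)
    omega
  have hA0 : algebraMap (Polynomial Fq) (RatFunc Fq) a₂ ≠ 0 := RatFunc.algebraMap_ne_zero h₂
  have ha : algebraMap (Polynomial Fq) (RatFunc Fq) a₂ * a
      = algebraMap (Polynomial Fq) (RatFunc Fq) a₁ := by
    rw [haeq, mul_comm, div_mul_cancel₀ _ hA0]
  refine ⟨∏ R ∈ hfin.toFinset, GIntR q r a₁ a₂ R, ?_, ?_⟩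
  · rw [Polynomial.map_prod]
    exact Finset.prod_congr rfl fun R hR => map_GIntR q r hq2 (by omega) a₁ a₂ R a ha
  · have hbound1 : ∀ R ∈ hfin.toFinset,
        polyHeight (GIntR q r a₁ a₂ R) ≤ 2*(2+D)*q^(r*(M+1)) := by
      intro R hR
      rw [Set.Finite.mem_toFinset] at hR
      refine (polyHeight_GIntR_le q r D hq2 hr a₁ a₂ R
        (le_trans (le_max_left _ _) hdeg) (le_trans (le_max_right _ _) hdeg)).trans ?_
      exact Nat.mul_le_mul_left _ (Nat.pow_le_pow_right (by omega)
        (Nat.mul_le_mul_left r (by have := hR.2.2; omega)))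
    have hprod := polyHeight_prod_le hfin.toFinset _ _ hbound1
    have hcard : hfin.toFinset.card ≤ q^(M+1) := by
      have hcf : hfin.toFinset.card ≤ Fintype.card (Fin (M+1) → Fq) := by
        refine Finset.card_le_card_of_injOn (fun R (j : Fin (M+1)) => R.coeff j)
          (fun _ _ => Finset.mem_univ _) ?_
        intro R1 hR1 R2 hR2 hco
        rw [Finset.mem_coe, Set.Finite.mem_toFinset] at hR1 hR2
        ext j
        rcases le_or_gt j M with hj | hj
        · have := congrFun hco ⟨j, by omega⟩
          simpa using this
        · rw [Polynomial.coeff_eq_zero_of_natDegree_lt (lt_of_le_of_lt hR1.2.2 hj),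
            Polynomial.coeff_eq_zero_of_natDegree_lt (lt_of_le_of_lt hR2.2.2 hj)]
      rwa [Fintype.card_fun, Fintype.card_fin, hq] at hcf
    have hpoweq : q^(M+1) * q^(r*(M+1)) = q ^ ((r+1)*(M+1)) := by
      rw [← pow_add]
      congr 1
      ring
    have hx : polyHeight (∏ R ∈ hfin.toFinset, GIntR q r a₁ a₂ R)
        ≤ 2*((2+D) * q ^ ((r+1)*(M+1))) := by
      calc polyHeight (∏ R ∈ hfin.toFinset, GIntR q r a₁ a₂ R)
          ≤ hfin.toFinset.card * (2*(2+D)*q^(r*(M+1))) := hprod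
      _ ≤ q^(M+1) * (2*(2+D)*q^(r*(M+1))) := Nat.mul_le_mul_right _ hcard
      _ = 2*((2+D) * (q^(M+1) * q^(r*(M+1)))) := by ring
      _ = 2*((2+D) * q ^ ((r+1)*(M+1))) := by rw [hpoweq]
    have hfinal := arith_final _ (q ^ ((r+1)*(M+1))) D
      (Nat.one_le_pow _ _ (by omega)) hx
    calc (polyHeight (∏ R ∈ hfin.toFinset, GIntR q r a₁ a₂ R) : ℝ)
        ≤ ((2*(2+D)^(q ^ ((r+1)*(M+1))) : ℕ) : ℝ) := by exact_mod_cast hfinal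
    _ = 2 * ((2:ℝ)+D) ^ q ^ ((r+1)*(M+1)) := by push_cast; ring
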